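/- Let $\vec\lambda=(\lambda_1,\dots,\lambda_d)\in\mathbb{R}^d$, $D(\vec\lambda)$ the corresponding diagonal matrix, $J_d$ the orthogonal projection of Hermitian matrices onto their diagonal parts, and $\bar J_d(H) = (\frac{1}{d}\mathrm{Tr}\,H)\,\mathrm{Id}_d$. Then $\int_{U(d)} \|J_d(U^* D(\vec\lambda) U) - \bar J_d(D(\vec\lambda))\|^2\, dU = \frac{\mathcal{S}_2(\vec\lambda)}{d+1} - \frac{\mathcal{S}_1(\vec\lambda)^2}{d(d+1)}$, where $\mathcal{S}_k(\vec\lambda) = \sum_j \lambda_j^k$ and integration is with respect to Haar probability measure on the unitary group $U(d)$. -/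

import Mathlib

open MeasureTheory

noncomputable instance matrixMeasurableSpace {m n : Type*} : MeasurableSpace (Matrix m n ℂ) :=
  MeasurableSpace.pi

/-
Only the weights |U_kj|² enter, and they sum to 1 over k; with c the mean of the λ_k the
integrand becomes ∑_j (∑_k (λ_k - c) |U_kj|²)². Its integral is therefore determined by the second
moments of the weights of one column, E|U_kj|²|U_lj|² = (1 + δ_kl)/(d(d+1)), and ∑_k (λ_k - c) = 0.
For k ≠ l, left invariance under the unitaries whose k-th row is (e_k + ω e_l)/√2, averaged over the
fourth roots of unity ω, gives 4E|U_kj|⁴ = E|U_kj|⁴ + E|U_lj|⁴ + 4E|U_kj|²|U_lj|². Swapping k and l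
shows that all E|U_kj|⁴ agree and are twice the mixed moments, and (∑_k |U_kj|²)² = 1 fixes the
constant.
-/

open Matrix Complex ComplexConjugate Finset

theorem sum_range_four_normSq_add_I_pow_mul_sq (z w : ℂ) :
    ∑ m ∈ range 4, normSq (z + I ^ m * w) ^ 2 =
      4 * ((normSq z + normSq w) ^ 2 + 2 * normSq z * normSq w) := by
  simp only [sum_range_succ, sum_range_zero, pow_succ, pow_zero, one_mul, I_mul_I, normSq_apply,
    add_re, add_im, mul_re, mul_im, neg_re, neg_im, one_re, one_im, I_re, I_im]
  ring

noncomputable def planeRotation {n : Type*} [DecidableEq n] (k l : n) (ω : ℂ) : Matrix n n ℂ :=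
  ((1 : Matrix n n ℂ).updateRow k ((√2 : ℂ)⁻¹ • (Pi.single k 1 + ω • Pi.single l 1))).updateRow l
    ((√2 : ℂ)⁻¹ • (Pi.single l 1 - conj ω • Pi.single k 1))

variable {n : Type*} [Fintype n] [DecidableEq n]

theorem planeRotation_mul_apply {k l : n} (hkl : k ≠ l) (ω : ℂ) (A : Matrix n n ℂ) (j : n) :
    (planeRotation k l ω * A) k j = (√2 : ℂ)⁻¹ * (A k j + ω * A l j) := by
  rw [mul_apply', planeRotation, updateRow_ne hkl, updateRow_self]
  simp [mul_add]

theorem planeRotation_mem_unitaryGroup {k l : n} (hkl : k ≠ l) {ω : ℂ} (hω : ‖ω‖ = 1) :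
    planeRotation k l ω ∈ unitaryGroup n ℂ := by
  have hω' : ω * conj ω = 1 := by simp [mul_conj, normSq_eq_norm_sq, hω]
  have hc : (√2 : ℂ)⁻¹ * (√2 : ℂ)⁻¹ = 1 / 2 := by
    rw [← mul_inv, ← ofReal_mul, Real.mul_self_sqrt zero_le_two]; norm_num
  have hrow : ∀ i, planeRotation k l ω i =
      if i = l then (√2 : ℂ)⁻¹ • (Pi.single l 1 - conj ω • Pi.single k 1)
      else if i = k then (√2 : ℂ)⁻¹ • (Pi.single k 1 + ω • Pi.single l 1)
      else Pi.single i 1 := by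
    intro i
    unfold planeRotation
    split_ifs with hil hik
    · rw [hil, updateRow_self]
    · rw [hik, updateRow_ne hkl, updateRow_self]
    · rw [updateRow_ne hil, updateRow_ne hik]; ext m; simp [one_apply, Pi.single_apply, eq_comm]
  rw [mem_unitaryGroup_iff]
  ext i j
  rw [mul_apply']
  change planeRotation k l ω i ⬝ᵥ star (planeRotation k l ω j) = _
  rw [hrow, hrow]
  split_ifs <;> subst_vars <;>
    simp [dotProduct_add, dotProduct_sub, dotProduct_smul, star_smul, Pi.single_apply, one_apply, *] <;>
    grind

theorem star_mul_diagonal_mul_self_apply (A : Matrix n n ℂ) (v : n → ℝ) (j : n) :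
    (star A * diagonal (fun k => (v k : ℂ)) * A) j j = ((∑ k, v k * normSq (A k j) : ℝ) : ℂ) := by
  push_cast
  simp only [mul_apply (M := star A * _), mul_diagonal, star_apply, RCLike.star_def,
    normSq_eq_conj_mul_self]
  exact sum_congr rfl fun k _ => by ring

theorem sum_normSq_apply_of_mem_unitaryGroup {U : Matrix n n ℂ} (hU : U ∈ unitaryGroup n ℂ)
    (j : n) : ∑ k, normSq (U k j) = 1 := by
  have h := congr_fun₂ (mem_unitaryGroup_iff'.mp hU) j j
  simp only [mul_apply, star_apply, one_apply_eq, RCLike.star_def, ← normSq_eq_conj_mul_self] at h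
  exact_mod_cast h

theorem norm_star_mul_diagonal_mul_apply_sub_sq {U : Matrix n n ℂ} (hU : U ∈ unitaryGroup n ℂ)
    (v : n → ℝ) (c : ℝ) (j : n) :
    ‖(star U * diagonal (fun k => (v k : ℂ)) * U) j j - c‖ ^ 2 =
      (∑ k, (v k - c) * normSq (U k j)) ^ 2 := by
  have hcol : ∑ k, (v k - c) * normSq (U k j) = ∑ k, v k * normSq (U k j) - c := by
    simp [sub_mul, sum_sub_distrib, ← mul_sum, sum_normSq_apply_of_mem_unitaryGroup hU]
  rw [star_mul_diagonal_mul_self_apply, hcol, ← ofReal_sub, norm_real, Real.norm_eq_abs, sq_abs]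

instance {m n : Type*} [Countable m] [Countable n] : BorelSpace (Matrix m n ℂ) :=
  inferInstanceAs (BorelSpace (m → n → ℂ))

instance : CompactSpace (unitaryGroup n ℂ) :=
  isCompact_iff_compactSpace.mp <|
    (isCompact_univ_pi fun _ => isCompact_univ_pi fun _ => isCompact_closedBall (0 : ℂ) 1)
      |>.of_isClosed_subset (isClosed_unitary (R := Matrix n n ℂ))
      fun U hU => by simpa using entry_norm_bound_of_unitary hU

@[fun_prop]
theorem continuous_unitaryGroup_apply (k j : n) : Continuous fun U : unitaryGroup n ℂ => U k j :=
  continuous_subtype_val.matrix_elem k j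

namespace Matrix.UnitaryGroup

variable (μ : Measure (unitaryGroup n ℂ))

theorem integrable_of_continuous [IsFiniteMeasure μ] {f : unitaryGroup n ℂ → ℝ}
    (hf : Continuous f) : Integrable f μ :=
  hf.integrable_of_hasCompactSupport (HasCompactSupport.of_compactSpace f)

section

variable [IsFiniteMeasure μ] [μ.IsMulLeftInvariant]

theorem four_mul_integral_normSq_mul_self_eq {k l : n} (hkl : k ≠ l) (j : n) :
    4 * ∫ U, normSq (U k j) * normSq (U k j) ∂μ =
      (∫ U, normSq (U k j) * normSq (U k j) ∂μ) + (∫ U, normSq (U l j) * normSq (U l j) ∂μ)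
        + 4 * ∫ U, normSq (U k j) * normSq (U l j) ∂μ := by
  let R (m : ℕ) : unitaryGroup n ℂ :=
    ⟨planeRotation k l (I ^ m), planeRotation_mem_unitaryGroup hkl (by simp)⟩
  let f (U : unitaryGroup n ℂ) : ℝ := normSq (U k j) * normSq (U k j)
  have hR (U : unitaryGroup n ℂ) : ∑ m ∈ range 4, f (R m * U) =
      normSq (U k j) * normSq (U k j) + normSq (U l j) * normSq (U l j)
        + 4 * (normSq (U k j) * normSq (U l j)) := by
    have hc : normSq (√2 : ℂ)⁻¹ = 1 / 2 := by simp
    simp only [f, R, mul_val, planeRotation_mul_apply hkl, normSq_mul, hc, ← sq, mul_pow,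
      ← mul_sum, sum_range_four_normSq_add_I_pow_mul_sq]
    ring
  calc 4 * ∫ U, f U ∂μ
      = ∑ m ∈ range 4, ∫ U, f (R m * U) ∂μ := by simp [integral_mul_left_eq_self]
    _ = ∫ U, ∑ m ∈ range 4, f (R m * U) ∂μ :=
        (integral_finsetSum _ fun m _ => integrable_of_continuous μ (by fun_prop)).symm
    _ = _ := by
        simp_rw [hR]
        rw [integral_add, integral_add, integral_const_mul] <;>
          exact integrable_of_continuous μ (by fun_prop)

theorem integral_normSq_mul_self_eq (k l j : n) :
    ∫ U, normSq (U k j) * normSq (U k j) ∂μ = ∫ U, normSq (U l j) * normSq (U l j) ∂μ := by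
  rcases eq_or_ne k l with rfl | hkl
  · rfl
  have hkl' := four_mul_integral_normSq_mul_self_eq μ hkl j
  have hlk' := four_mul_integral_normSq_mul_self_eq μ hkl.symm j
  rw [show ∫ U, normSq (U l j) * normSq (U k j) ∂μ = ∫ U, normSq (U k j) * normSq (U l j) ∂μ by
    simp_rw [mul_comm]] at hlk'
  linarith

theorem integral_normSq_mul_normSq_of_ne {k l : n} (hkl : k ≠ l) (j : n) :
    ∫ U, normSq (U k j) * normSq (U l j) ∂μ = (∫ U, normSq (U k j) * normSq (U k j) ∂μ) / 2 := by
  have h := four_mul_integral_normSq_mul_self_eq μ hkl j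
  rw [integral_normSq_mul_self_eq μ l k] at h
  linarith

theorem integral_normSq_mul_normSq_eq (k l k₀ j : n) :
    ∫ U, normSq (U k j) * normSq (U l j) ∂μ =
      (1 + if k = l then 1 else 0) * ((∫ U, normSq (U k₀ j) * normSq (U k₀ j) ∂μ) / 2) := by
  split_ifs with h
  · rw [h, integral_normSq_mul_self_eq μ l k₀]; ring
  · rw [integral_normSq_mul_normSq_of_ne μ h, integral_normSq_mul_self_eq μ k k₀]; ring

theorem integral_sum_mul_normSq_sq_eq_mul (v : n → ℝ) (k₀ j : n) :
    ∫ U, (∑ k, v k * normSq (U k j)) ^ 2 ∂μ =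
      ((∑ k, v k) ^ 2 + ∑ k, v k ^ 2) * ((∫ U, normSq (U k₀ j) * normSq (U k₀ j) ∂μ) / 2) := by
  calc ∫ U, (∑ k, v k * normSq (U k j)) ^ 2 ∂μ
      = ∫ U, ∑ k, ∑ l, v k * v l * (normSq (U k j) * normSq (U l j)) ∂μ := by
        congr 1; funext U
        rw [sq, sum_mul_sum]
        exact sum_congr rfl fun _ _ => sum_congr rfl fun _ _ => by ring
    _ = ∑ k, ∑ l, v k * v l * ∫ U, normSq (U k j) * normSq (U l j) ∂μ := by
        rw [integral_finsetSum _ fun _ _ => integrable_of_continuous μ (by fun_prop)]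
        refine sum_congr rfl fun k _ => ?_
        rw [integral_finsetSum _ fun _ _ => integrable_of_continuous μ (by fun_prop)]
        simp only [integral_const_mul]
    _ = _ := by
        have hpair (k l : n) := integral_normSq_mul_normSq_eq μ k l k₀ j
        generalize ∫ U, normSq (U k₀ j) * normSq (U k₀ j) ∂μ = q at hpair ⊢
        simp only [hpair, mul_add, add_mul, one_mul, mul_ite,
          ite_mul, mul_zero, zero_mul, sum_add_distrib, sum_ite_eq, mem_univ, if_true, sq, sum_mul,
          mul_sum]
        rw [sum_comm]

end

variable [IsProbabilityMeasure μ] [μ.IsMulLeftInvariant]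

theorem integral_normSq_mul_self (k j : n) :
    ∫ U, normSq (U k j) * normSq (U k j) ∂μ = 2 / (Fintype.card n * (Fintype.card n + 1)) := by
  have h := integral_sum_mul_normSq_sq_eq_mul μ 1 k j
  simp only [Pi.one_apply, one_mul, one_pow, sum_normSq_apply_of_mem_unitaryGroup (SetLike.coe_mem _),
    integral_const, probReal_univ, smul_eq_mul, mul_one, sum_const, card_univ, nsmul_eq_mul] at h
  have hcard : (0 : ℝ) < Fintype.card n := Nat.cast_pos.mpr (Fintype.card_pos_iff.mpr ⟨k⟩)
  rw [eq_div_iff (by positivity)]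
  linear_combination -2 * h

theorem integral_sum_mul_normSq_sq (v : n → ℝ) (j : n) :
    ∫ U, (∑ k, v k * normSq (U k j)) ^ 2 ∂μ =
      ((∑ k, v k) ^ 2 + ∑ k, v k ^ 2) / (Fintype.card n * (Fintype.card n + 1)) := by
  rw [integral_sum_mul_normSq_sq_eq_mul μ v j j, integral_normSq_mul_self]
  ring

end Matrix.UnitaryGroup

theorem stmt_11_general (d : ℕ) (lam : Fin d → ℝ)
    (μ : Measure (Matrix.unitaryGroup (Fin d) ℂ)) [IsProbabilityMeasure μ]
    (hinv : ∀ V : Matrix.unitaryGroup (Fin d) ℂ,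
      Measure.map (fun U : Matrix.unitaryGroup (Fin d) ℂ => V * U) μ = μ) :
    ∫ U : Matrix.unitaryGroup (Fin d) ℂ,
        ∑ j, (‖
          ((star (U : Matrix (Fin d) (Fin d) ℂ) * Matrix.diagonal (fun k => (lam k : ℂ)) *
              (U : Matrix (Fin d) (Fin d) ℂ)) j j - (∑ k, lam k) / d)‖) ^ 2 ∂μ =
      (∑ j, lam j ^ 2) / (d + 1) - (∑ j, lam j) ^ 2 / (d * (d + 1)) := by
  rcases Nat.eq_zero_or_pos d with rfl | hd
  · simp
  have : μ.IsMulLeftInvariant := ⟨hinv⟩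
  simp_rw [← ofReal_natCast, ← ofReal_div,
    norm_star_mul_diagonal_mul_apply_sub_sq (SetLike.coe_mem _)]
  set c := (∑ k, lam k) / d
  have hsum : ∑ k, (lam k - c) = 0 := by
    simp only [sum_sub_distrib, sum_const, card_univ, Fintype.card_fin, nsmul_eq_mul, c]
    field_simp
    ring
  have hsq : ∑ k, (lam k - c) ^ 2 = ∑ k, lam k ^ 2 - (∑ k, lam k) ^ 2 / d := by
    simp only [sub_sq, sum_add_distrib, sum_sub_distrib, ← sum_mul, ← mul_sum, sum_const, card_univ,
      Fintype.card_fin, nsmul_eq_mul, c]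
    field_simp
    ring
  rw [integral_finsetSum _ fun j _ => UnitaryGroup.integrable_of_continuous μ (by fun_prop)]
  simp_rw [UnitaryGroup.integral_sum_mul_normSq_sq, hsum, hsq]
  simp only [ne_eq, OfNat.ofNat_ne_zero, not_false_eq_true, zero_pow, zero_add, Fintype.card_fin,
    sum_const, card_univ, nsmul_eq_mul]
  field_simp

theorem stmt_11 (d : ℕ) (hd : 1 ≤ d) (lam : Fin d → ℝ)
    (μ : Measure (Matrix.unitaryGroup (Fin d) ℂ)) [IsProbabilityMeasure μ]
    (hinv : ∀ V : Matrix.unitaryGroup (Fin d) ℂ,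
      Measure.map (fun U : Matrix.unitaryGroup (Fin d) ℂ => V * U) μ = μ) :
    ∫ U : Matrix.unitaryGroup (Fin d) ℂ,
        ∑ j, (‖
          ((star (U : Matrix (Fin d) (Fin d) ℂ) * Matrix.diagonal (fun k => (lam k : ℂ)) *
              (U : Matrix (Fin d) (Fin d) ℂ)) j j - (∑ k, lam k) / d)‖) ^ 2 ∂μ =
      (∑ j, lam j ^ 2) / (d + 1) - (∑ j, lam j) ^ 2 / (d * (d + 1)) :=
  stmt_11_general d lam μ hinv
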